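/- Let k be a field, G a finite group, and β a normalized 3-cocycle on G with values in kˣ. Then the multiplication of the twisted Drinfel'd double D^β(k[G]) is associative, and the element Σ_{h∈G} ⟨h,e⟩ is a two-sided multiplicative identity; hence D^β(k[G]) is a unital associative k-algebra. -/

import Mathlib

/-! Associativity of `D^β(k[G])` reduces, after reindexing the double sums, to the twisted
2-cocycle identity `θ_g(x,y) θ_g(xy,z) = θ_{x⁻¹gx}(y,z) θ_g(x,yz)`, which is a product of four
instances of the 3-cocycle condition. Normalization of `β` gives `θ_g(e,y) = θ_g(x,e) = 1`,
which makes `Σ_h ⟨h,e⟩` a two-sided identity. -/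

open scoped BigOperators TensorProduct

namespace StringyOrbifold

/-- A normalized 3-cocycle on `G` with values in `kˣ`. -/
def IsNormalized3Cocycle {k G : Type*} [Field k] [Group G] (β : G → G → G → kˣ) : Prop :=
  (∀ g h l m : G, β g h l * β g (h * l) m * β h l m = β (g * h) l m * β g h (l * m)) ∧
  (∀ g h : G, β 1 g h = 1 ∧ β g 1 h = 1 ∧ β g h 1 = 1)

/-- A normalized 2-cocycle on `G` with values in `kˣ`. -/
def IsNormalized2Cocycle {k G : Type*} [Field k] [Group G] (α : G → G → kˣ) : Prop :=
  (∀ g h l : G, α g h * α (g * h) l = α h l * α g (h * l)) ∧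
  (∀ g : G, α g 1 = 1 ∧ α 1 g = 1)

/-- `θ_g(x,y) = β(g,x,y)·β(x,y,(xy)⁻¹g(xy)) / β(x,x⁻¹gx,y)`. -/
def ddTheta {k G : Type*} [Field k] [Group G] (β : G → G → G → kˣ) (g x y : G) : kˣ :=
  β g x y * β x y ((x * y)⁻¹ * g * (x * y)) / β x (x⁻¹ * g * x) y

/-- `γ_x(g₁,g₂) = β(g₁,g₂,x)·β(x,x⁻¹g₁x,x⁻¹g₂x) / β(g₁,x,x⁻¹g₂x)`. -/
def ddGamma {k G : Type*} [Field k] [Group G] (β : G → G → G → kˣ) (x g1 g2 : G) : kˣ :=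
  β g1 g2 x * β x (x⁻¹ * g1 * x) (x⁻¹ * g2 * x) / β g1 x (x⁻¹ * g2 * x)

/-- The trivial 3-cocycle. -/
def trivCocycle (k G : Type*) [Field k] [Group G] : G → G → G → kˣ := fun _ _ _ => 1

/-- The underlying `k`-vector space of the twisted Drinfel'd double `D^β(k[G])`:
the free `k`-module on the basis `⟨g,x⟩`, `(g,x) ∈ G × G`, realized as functions. -/
abbrev DD (k G : Type*) := G × G → k

/-- The function model for `D^β(k[G]) ⊗ D^β(k[G])`. -/
abbrev DD2 (k G : Type*) := (G × G) × (G × G) → k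

/-- The function model for the threefold tensor power of `D^β(k[G])`. -/
abbrev DD3 (k G : Type*) := (G × G) × (G × G) × (G × G) → k

/-- The basis element `⟨g,x⟩` of `D^β(k[G])`. -/
def ddBasis {k G : Type*} [Field k] [DecidableEq G] (g x : G) : DD k G :=
  fun p => if p = (g, x) then 1 else 0

/-- The multiplication of `D^β(k[G])`, the bilinear extension of
`⟨g,x⟩·⟨h,y⟩ = δ_{g,xhx⁻¹} θ_g(x,y) ⟨g,xy⟩`. -/
def ddMul {k G : Type*} [Field k] [Group G] [Fintype G]
    (β : G → G → G → kˣ) (a b : DD k G) : DD k G :=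
  fun p => ∑ x : G, a (p.1, x) * b (x⁻¹ * p.1 * x, x⁻¹ * p.2) * (ddTheta β p.1 x (x⁻¹ * p.2) : k)

/-- The identity `Σ_{h∈G} ⟨h,e⟩` of `D^β(k[G])`. -/
def ddOne (k G : Type*) [Field k] [Group G] [Fintype G] [DecidableEq G] : DD k G :=
  ∑ g : G, ddBasis g 1

/-- The elementary tensor `a ⊗ b` in the function model of `D^β(k[G]) ⊗ D^β(k[G])`. -/
def ddTensor {k G : Type*} [Field k] (a b : DD k G) : DD2 k G :=
  fun p => a p.1 * b p.2

/-- The elementary tensor `a ⊗ b ⊗ c` in the function model of the triple tensor power. -/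
def ddTensor3 {k G : Type*} [Field k] (a b c : DD k G) : DD3 k G :=
  fun p => a p.1 * b p.2.1 * c p.2.2

/-- Componentwise multiplication on `D^β(k[G]) ⊗ D^{β'}(k[G])` in the function model. -/
def dd2Mul {k G : Type*} [Field k] [Group G] [Fintype G]
    (β β' : G → G → G → kˣ) (a b : DD2 k G) : DD2 k G :=
  fun p => ∑ x : G, ∑ y : G,
    a ((p.1.1, x), (p.2.1, y)) *
      b ((x⁻¹ * p.1.1 * x, x⁻¹ * p.1.2), (y⁻¹ * p.2.1 * y, y⁻¹ * p.2.2)) *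
      (ddTheta β p.1.1 x (x⁻¹ * p.1.2) : k) * (ddTheta β' p.2.1 y (y⁻¹ * p.2.2) : k)

/-- Componentwise multiplication on the threefold tensor power of `D^β(k[G])`. -/
def dd3Mul {k G : Type*} [Field k] [Group G] [Fintype G]
    (β : G → G → G → kˣ) (a b : DD3 k G) : DD3 k G :=
  fun p => ∑ x : G, ∑ y : G, ∑ z : G,
    a ((p.1.1, x), (p.2.1.1, y), (p.2.2.1, z)) *
      b ((x⁻¹ * p.1.1 * x, x⁻¹ * p.1.2), (y⁻¹ * p.2.1.1 * y, y⁻¹ * p.2.1.2),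
        (z⁻¹ * p.2.2.1 * z, z⁻¹ * p.2.2.2)) *
      (ddTheta β p.1.1 x (x⁻¹ * p.1.2) : k) * (ddTheta β p.2.1.1 y (y⁻¹ * p.2.1.2) : k) *
      (ddTheta β p.2.2.1 z (z⁻¹ * p.2.2.2) : k)

/-- The comultiplication of `D^β(k[G])`: the linear extension of
`Δ(⟨g,x⟩) = Σ_{g₁g₂=g} γ_x(g₁,g₂) ⟨g₁,x⟩ ⊗ ⟨g₂,x⟩`. -/
def ddComul {k G : Type*} [Field k] [Group G] [DecidableEq G]
    (β : G → G → G → kˣ) (a : DD k G) : DD2 k G :=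
  fun p =>
    if p.1.2 = p.2.2 then (ddGamma β p.1.2 p.1.1 p.2.1 : k) * a (p.1.1 * p.2.1, p.1.2) else 0

/-- The map `id ⊗ Δ` from `D^β(k[G])^{⊗2}` to `D^β(k[G])^{⊗3}` in the function model. -/
def idTensorComul {k G : Type*} [Field k] [Group G] [DecidableEq G]
    (β : G → G → G → kˣ) (u : DD2 k G) : DD3 k G :=
  fun p => if p.2.1.2 = p.2.2.2 then
      (ddGamma β p.2.1.2 p.2.1.1 p.2.2.1 : k) * u (p.1, (p.2.1.1 * p.2.2.1, p.2.1.2))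
    else 0

/-- The map `Δ ⊗ id` from `D^β(k[G])^{⊗2}` to `D^β(k[G])^{⊗3}` in the function model. -/
def comulTensorId {k G : Type*} [Field k] [Group G] [DecidableEq G]
    (β : G → G → G → kˣ) (u : DD2 k G) : DD3 k G :=
  fun p => if p.1.2 = p.2.1.2 then
      (ddGamma β p.1.2 p.1.1 p.2.1.1 : k) * u ((p.1.1 * p.2.1.1, p.1.2), p.2.2)
    else 0

/-- The flip of the two tensor factors. -/
def ddSwap {k G : Type*} (u : DD2 k G) : DD2 k G := fun p => u (p.2, p.1)

/-- The counit `ε(⟨g,x⟩) = δ_{g,e}` of `D^β(k[G])`. -/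
def ddCounit {k G : Type*} [Field k] [Group G] [Fintype G] (a : DD k G) : k :=
  ∑ x : G, a (1, x)

/-- The injection `k[G]^* → D^β(k[G])`, `δ_g ↦ ⟨g,e⟩`. -/
def ddIota {k G : Type*} [Field k] [Group G] [DecidableEq G] (f : G → k) : DD k G :=
  fun p => if p.2 = 1 then f p.1 else 0

/-- The diagonal map `D^{ββ'}(k[G]) → D^β(k[G]) ⊗ D^{β'}(k[G])`, `⟨g,x⟩ ↦ ⟨g,x⟩ ⊗ ⟨g,x⟩`. -/
def ddDiag {k G : Type*} [Field k] [DecidableEq G] (a : DD k G) : DD2 k G :=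
  fun p => if p.1 = p.2 then a p.1 else 0

/-- The antipode of `D^β(k[G])`: the linear extension of
`S(⟨g,x⟩) = (θ_{g⁻¹}(x,x⁻¹)·γ_x(g,g⁻¹))⁻¹ ⟨x⁻¹g⁻¹x, x⁻¹⟩`. -/
def ddAntipode {k G : Type*} [Field k] [Group G] (β : G → G → G → kˣ) (a : DD k G) : DD k G :=
  fun p =>
    (((ddTheta β (p.2⁻¹ * p.1 * p.2) p.2⁻¹ p.2 *
        ddGamma β p.2⁻¹ (p.2⁻¹ * p.1⁻¹ * p.2) (p.2⁻¹ * p.1 * p.2))⁻¹ : kˣ) : k) *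
      a (p.2⁻¹ * p.1⁻¹ * p.2, p.2⁻¹)

/-- The antipode of the untwisted double `D(k[G])`: `S(⟨g,x⟩) = ⟨x⁻¹g⁻¹x, x⁻¹⟩`. -/
def ddAntipode0 {k G : Type*} [Field k] [Group G] (a : DD k G) : DD k G :=
  fun p => a (p.2⁻¹ * p.1⁻¹ * p.2, p.2⁻¹)

/-- The operator `φ(x)` on `D^β(k[G])^{comm}`: the linear extension of
`φ(x)(⟨h,y⟩) = (θ_{xhx⁻¹}(x,y)/θ_{xhx⁻¹}(xyx⁻¹,x))·⟨xhx⁻¹, xyx⁻¹⟩`. -/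
def ddPhi {k G : Type*} [Field k] [Group G] (β : G → G → G → kˣ) (x : G) (a : DD k G) :
    DD k G :=
  fun p => ((ddTheta β p.1 x (x⁻¹ * p.2 * x) / ddTheta β p.1 p.2 x : kˣ) : k) *
    a (x⁻¹ * p.1 * x, x⁻¹ * p.2 * x)

/-- The span of the basis elements `⟨g,x⟩` with `gx = xg`, i.e. `D^β(k[G])^{comm}`. -/
def ddCommSpan (k G : Type*) [Field k] [Group G] [DecidableEq G] : Submodule k (DD k G) :=
  Submodule.span k {v : DD k G | ∃ g x : G, g * x = x * g ∧ v = ddBasis g x}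

/-- The underlying space of the twisted group ring `k^α[G]`. -/
abbrev TG (k G : Type*) := G → k

/-- The basis element `1_g` of `k^α[G]`. -/
def tgBasis {k G : Type*} [Field k] [DecidableEq G] (g : G) : TG k G :=
  fun z => if z = g then 1 else 0

/-- The multiplication `1_g·1_h = α(g,h) 1_{gh}` of the twisted group ring `k^α[G]`. -/
def tgMul {k G : Type*} [Field k] [Group G] [Fintype G] (α : G → G → kˣ) (a b : TG k G) :
    TG k G :=
  fun z => ∑ x : G, a x * b (x⁻¹ * z) * (α x (x⁻¹ * z) : k)

/-- The identity `1_e` of `k^α[G]`. -/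
def tgOne (k G : Type*) [Field k] [Group G] [DecidableEq G] : TG k G := tgBasis 1

/-- The inverse `α(g,g⁻¹)⁻¹·1_{g⁻¹}` of the basis element `1_g` in `k^α[G]`. -/
def tgInvBasis {k G : Type*} [Field k] [Group G] [DecidableEq G] (α : G → G → kˣ) (g : G) :
    TG k G :=
  (((α g g⁻¹)⁻¹ : kˣ) : k) • tgBasis g⁻¹

/-- Conjugation `ρ(g)(a) = 1_g · a · (1_g)⁻¹` in the twisted group ring `k^α[G]`. -/
def tgConj {k G : Type*} [Field k] [Group G] [Fintype G] [DecidableEq G]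
    (α : G → G → kˣ) (g : G) (a : TG k G) : TG k G :=
  tgMul α (tgBasis g) (tgMul α a (tgInvBasis α g))

theorem comm_inv_left {G : Type*} [Group G] {g x : G} (h : x * g = g * x) :
    x⁻¹ * g = g * x⁻¹ := by
  rw [eq_mul_inv_iff_mul_eq, mul_assoc, ← h, ← mul_assoc, inv_mul_cancel, one_mul]

theorem comm_inv_mul {G : Type*} [Group G] {g x z : G} (hx : x * g = g * x)
    (hz : z * g = g * z) : (x⁻¹ * z) * g = g * (x⁻¹ * z) := by
  rw [mul_assoc, hz, ← mul_assoc, comm_inv_left hx, mul_assoc]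

/-- The index set `{(g,x) : x ∈ Z(g)}` of the direct sum `⊕_g k^{θ_g}[Z(g)]`. -/
abbrev CentPairs (G : Type*) [Group G] := Σ g : G, {x : G // x * g = g * x}

/-- The underlying space of `⊕_g k^{θ_g}[Z(g)]`. -/
abbrev TY (k G : Type*) [Group G] := CentPairs G → k

/-- The multiplication of `⊕_g k^{θ_g}[Z(g)]`: in the `g`-th summand,
`1_x·1_y = θ_g(x,y)·1_{xy}` for `x, y ∈ Z(g)`, and distinct summands multiply to `0`. -/
def tyMul {k G : Type*} [Field k] [Group G] [Fintype G] [DecidableEq G]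
    (β : G → G → G → kˣ) (a b : TY k G) : TY k G :=
  fun q => ∑ x : {x : G // x * q.1 = q.1 * x},
    a ⟨q.1, x⟩ * b ⟨q.1, ⟨(x : G)⁻¹ * (q.2 : G), comm_inv_mul x.2 q.2.2⟩⟩ *
      (ddTheta β q.1 (x : G) ((x : G)⁻¹ * (q.2 : G)) : k)

/-- The identity of `⊕_g k^{θ_g}[Z(g)]`. -/
def tyOne (k G : Type*) [Field k] [Group G] [DecidableEq G] : TY k G :=
  fun q => if (q.2 : G) = 1 then 1 else 0

/-- The map `⊕_g k^{θ_g}[Z(g)] → D^β(k[G])` sending `1_x` in the `g`-th summand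
to `⟨g,x⟩`. -/
def tyMap {k G : Type*} [Field k] [Group G] [DecidableEq G] (f : TY k G) : DD k G :=
  fun p => if h : p.2 * p.1 = p.1 * p.2 then f ⟨p.1, ⟨p.2, h⟩⟩ else 0

/-- The action of `D^{ββ'}(k[G])` on `A ⊗ B`, assigning to `⟨g,x⟩` the endomorphism
`ρ_A(⟨g,x⟩) ⊗ ρ_B(⟨g,x⟩)` and extending linearly. -/
noncomputable def ddTensorAction {k G A B : Type*} [Field k] [Group G] [Fintype G]
    [DecidableEq G] [AddCommGroup A] [Module k A] [AddCommGroup B] [Module k B]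
    (ρA : DD k G → (A →ₗ[k] A)) (ρB : DD k G → (B →ₗ[k] B)) (a : DD k G) :
    (A ⊗[k] B) →ₗ[k] (A ⊗[k] B) :=
  ∑ p : G × G, a p • TensorProduct.map (ρA (ddBasis p.1 p.2)) (ρB (ddBasis p.1 p.2))

section Associativity

variable {k G : Type*} [Field k] [Group G] (β : G → G → G → kˣ)

-- Additively, this is the alternating sum of the cocycle identities at
-- `(g,x,y,z)`, `(x,x⁻¹gx,y,z)`, `(x,y,(xy)⁻¹g(xy),z)` and `(x,y,z,(xyz)⁻¹g(xyz))`.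
theorem ddTheta_mul_ddTheta
    (hβ : ∀ g h l m : G, β g h l * β g (h * l) m * β h l m = β (g * h) l m * β g h (l * m))
    (g x y z : G) :
    ddTheta β g x y * ddTheta β g (x * y) z =
      ddTheta β (x⁻¹ * g * x) y z * ddTheta β g x (y * z) := by
  have h1 := congrArg Additive.ofMul (hβ g x y z)
  have h2 := congrArg Additive.ofMul (hβ x (x⁻¹ * g * x) y z)
  have h3 := congrArg Additive.ofMul (hβ x y ((x * y)⁻¹ * g * (x * y)) z)
  have h4 := congrArg Additive.ofMul (hβ x y z ((x * y * z)⁻¹ * g * (x * y * z)))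
  apply Additive.ofMul.injective
  simp only [ddTheta, ofMul_mul, ofMul_div, mul_inv_rev, mul_assoc, mul_inv_cancel_left]
    at h1 h2 h3 h4 ⊢
  linear_combination (norm := abel) h1 - h2 + h3 - h4

theorem ddMul_assoc [Fintype G]
    (hβ : ∀ g h l m : G, β g h l * β g (h * l) m * β h l m = β (g * h) l m * β g h (l * m))
    (a b c : DD k G) : ddMul β (ddMul β a b) c = ddMul β a (ddMul β b c) := by
  funext ⟨g, w⟩
  simp only [ddMul, Finset.sum_mul, Finset.mul_sum]
  rw [Finset.sum_comm]
  refine Finset.sum_congr rfl fun y _ => ?_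
  refine Fintype.sum_equiv (Equiv.mulLeft y⁻¹) _ _ fun x => ?_
  have hθ := congrArg Units.val (ddTheta_mul_ddTheta β hβ g y (y⁻¹ * x) (x⁻¹ * w))
  simp only [Equiv.coe_mulLeft, Units.val_mul, mul_inv_rev, mul_assoc, inv_mul_cancel_left,
    mul_inv_cancel_left] at hθ ⊢
  linear_combination a (g, y) * b (y⁻¹ * (g * y), y⁻¹ * x) * c (x⁻¹ * (g * x), x⁻¹ * w) * hθ

end Associativity

section Unit

variable {k G : Type*} [Field k] [Group G] (β : G → G → G → kˣ)

theorem ddTheta_one_left (hβ : IsNormalized3Cocycle β) (g y : G) : ddTheta β g 1 y = 1 := by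
  simp [ddTheta, (hβ.2 _ _).1, (hβ.2 _ _).2.1]

theorem ddTheta_one_right (hβ : IsNormalized3Cocycle β) (g x : G) : ddTheta β g x 1 = 1 := by
  simp [ddTheta, (hβ.2 _ _).2.1, (hβ.2 _ _).2.2]

variable [Fintype G] [DecidableEq G]

theorem ddOne_apply (p : G × G) : ddOne k G p = if p.2 = 1 then 1 else 0 := by
  simp only [ddOne, ddBasis, Finset.sum_apply, Prod.ext_iff]
  split_ifs with h <;> simp [h]

theorem ddOne_mul (hβ : IsNormalized3Cocycle β) (a : DD k G) : ddMul β (ddOne k G) a = a := by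
  funext p
  rw [ddMul, Finset.sum_eq_single 1 (fun x _ hx => by simp [ddOne_apply, hx]) (by simp)]
  simp [ddOne_apply, ddTheta_one_left β hβ]

theorem ddMul_ddOne (hβ : IsNormalized3Cocycle β) (a : DD k G) : ddMul β a (ddOne k G) = a := by
  funext p
  rw [ddMul, Finset.sum_eq_single p.2 (fun x _ hx => by simp [ddOne_apply, inv_mul_eq_one, hx])
    (by simp)]
  simp [ddOne_apply, ddTheta_one_right β hβ]

end Unit

/-- `D^β(k[G])` is a unital associative `k`-algebra with
identity `Σ_{h∈G} ⟨h,e⟩`. -/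
theorem stmt2 {k G : Type*} [Field k] [Group G] [Fintype G] [DecidableEq G]
    (β : G → G → G → kˣ) (hβ : IsNormalized3Cocycle β) :
    (∀ a b c : DD k G, ddMul β (ddMul β a b) c = ddMul β a (ddMul β b c)) ∧
    (∀ a : DD k G, ddMul β (ddOne k G) a = a ∧ ddMul β a (ddOne k G) = a) :=
  ⟨ddMul_assoc β hβ.1, fun a => ⟨ddOne_mul β hβ a, ddMul_ddOne β hβ a⟩⟩

end StringyOrbifold
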